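/- Let k ≥ 1 and n, p ≥ 0. The number of words π ∈ [2k]^n with des_O(π) = p, where O is the set of odd positive integers (equivalently, the number of words π ∈ [2k]^n with ris_E(π) = p, where E is the set of even positive integers), equals Σ_{j=0}^{n} Σ_{i=0}^{j} (−1)^{n+p+i} · 2^{j} · C(j, i) · C(k·i, n) · C(n−j, p). -/

import Mathlib

open Finset

/-- The number of descents of the word `w : Fin n → Fin k` (encoding a word over the
alphabet `[k] = {1,…,k}`, position `p` carrying the letter `(w p : ℕ) + 1`) whose
first element satisfies `X`. -/
def descCount (X : ℕ → Prop) [DecidablePred X] {k n : ℕ} (w : Fin n → Fin k) : ℕ :=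
  (Finset.univ.filter (fun p : Fin n × Fin n =>
    (p.1 : ℕ) + 1 = (p.2 : ℕ) ∧ (w p.2 : ℕ) < (w p.1 : ℕ) ∧ X ((w p.1 : ℕ) + 1))).card

/-- The number of rises of the word `w` whose first element satisfies `X`. -/
def riseCount (X : ℕ → Prop) [DecidablePred X] {k n : ℕ} (w : Fin n → Fin k) : ℕ :=
  (Finset.univ.filter (fun p : Fin n × Fin n =>
    (p.1 : ℕ) + 1 = (p.2 : ℕ) ∧ (w p.1 : ℕ) < (w p.2 : ℕ) ∧ X ((w p.1 : ℕ) + 1))).card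

/-! Mark some of the odd descents of a word, i.e. write `x ^ des = ∑_S (x - 1) ^ |S|` over sets
`S` of odd descents. Chains of marked descents cut the word into runs `ℓ₁ > ⋯ > ℓ_c` in which
every letter but the last is odd and the letters lie in distinct pairs `{2s - 1, 2s}`, so there
are `2 C(k, c)` runs of length `c`. Hence
`∑_w x ^ des_O(w) = ∑_j 2 ^ j N(n, j) (x - 1) ^ (n - j)` for `N(n, j) = [zⁿ] ((1 + z) ^ k - 1) ^ j`.
The run recursion is obtained by prepending letters while weighting the first letter by a
binomial in the number of pairs above it. Taking the coefficient of `x ^ p` and expanding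
`((1 + z) ^ k - 1) ^ j` gives the formula; the letter reversal `a ↦ 2k + 1 - a` exchanges odd
descents with even rises. -/

lemma descCount_eq_sum (X : ℕ → Prop) [DecidablePred X] {K n : ℕ} (w : Fin n → Fin K) :
    descCount X w = ∑ i : Fin n, ∑ j : Fin n,
      if (i : ℕ) + 1 = j ∧ (w j : ℕ) < w i ∧ X ((w i : ℕ) + 1) then 1 else 0 := by
  rw [descCount, card_filter, Fintype.sum_prod_type]

lemma descCount_eq_zero_of_le_one (X : ℕ → Prop) [DecidablePred X] {K n : ℕ} (hn : n ≤ 1)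
    (w : Fin n → Fin K) : descCount X w = 0 := by
  rw [descCount, card_eq_zero, filter_eq_empty_iff]
  rintro ⟨i, j⟩ - ⟨h, -⟩
  have := j.isLt
  omega

lemma descCount_cons (X : ℕ → Prop) [DecidablePred X] {K n : ℕ} (a : Fin K)
    (w : Fin (n + 1) → Fin K) :
    descCount X (Fin.cons a w : Fin (n + 2) → Fin K) =
      descCount X w + if (w 0 : ℕ) < a ∧ X ((a : ℕ) + 1) then 1 else 0 := by
  rw [descCount_eq_sum, descCount_eq_sum, Fin.sum_univ_succ, add_comm]
  congr 1
  · refine sum_congr rfl fun i _ => ?_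
    rw [Fin.sum_univ_succ]
    simp [Fin.val_succ]
  · rw [Fin.sum_univ_succ, Fin.sum_univ_succ]
    simp

lemma sum_fun_fin_succ {M α : Type*} [AddCommMonoid M] [Fintype α] {n : ℕ}
    (f : (Fin (n + 1) → α) → M) :
    ∑ w, f w = ∑ a, ∑ w : Fin n → α, f (Fin.cons a w) := by
  rw [← (Fin.consEquiv fun _ => α).sum_comp, Fintype.sum_prod_type]
  rfl

lemma sum_range_two_mul {M : Type*} [AddCommMonoid M] (k : ℕ) (f : ℕ → M) :
    ∑ a ∈ range (2 * k), f a = ∑ s ∈ range k, (f (2 * s) + f (2 * s + 1)) := by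
  induction k with
  | zero => simp
  | succ k ih => rw [mul_add_one, sum_range_succ, sum_range_succ, ih, sum_range_succ, add_assoc]

lemma sum_range_choose_eq_choose_succ (r : ℕ) :
    ∀ m, ∑ c ∈ range m, c.choose r = m.choose (r + 1)
  | 0 => rfl
  | m + 1 => by
    rw [sum_range_succ, sum_range_choose_eq_choose_succ r m, Nat.choose_succ_succ', add_comm]

lemma sum_choose_pairs_above (k r : ℕ) :
    ∑ a : Fin (2 * k), (k - 1 - (a : ℕ) / 2).choose r = 2 * k.choose (r + 1) := by
  rw [Fin.sum_univ_eq_sum_range (fun a => (k - 1 - a / 2).choose r), sum_range_two_mul,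
    ← sum_range_choose_eq_choose_succ, ← sum_range_reflect (fun c => c.choose r), mul_sum]
  refine sum_congr rfl fun s _ => ?_
  rw [show 2 * s / 2 = s by omega, show (2 * s + 1) / 2 = s by omega, two_mul]

lemma sum_choose_pairs_above_of_lt (k r b : ℕ) :
    ∑ a : Fin (2 * k),
        (if b < (a : ℕ) ∧ (a : ℕ) % 2 = 0 then (k - 1 - (a : ℕ) / 2).choose r else 0)
      = (k - 1 - b / 2).choose (r + 1) := by
  calc _ = ∑ s ∈ range k, if b / 2 < s then (k - 1 - s).choose r else 0 := by
        rw [Fin.sum_univ_eq_sum_range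
          (fun a => if b < a ∧ a % 2 = 0 then (k - 1 - a / 2).choose r else 0), sum_range_two_mul]
        refine sum_congr rfl fun s _ => ?_
        rw [if_neg (show ¬(b < 2 * s + 1 ∧ (2 * s + 1) % 2 = 0) by omega), add_zero,
          show 2 * s / 2 = s by omega]
        exact if_congr (by omega) rfl rfl
    _ = ∑ c ∈ range k, if c < k - 1 - b / 2 then c.choose r else 0 := by
        rw [← sum_range_reflect]
        refine sum_congr rfl fun c hc => ?_
        rw [mem_range] at hc
        rw [show k - 1 - (k - 1 - c) = c by omega]
        exact if_congr (by omega) rfl rfl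
    _ = ∑ c ∈ range (k - 1 - b / 2), c.choose r := by
        rw [← sum_filter]
        congr 1
        ext c
        simp only [mem_filter, mem_range]
        omega
    _ = _ := sum_range_choose_eq_choose_succ r _

lemma descCount_odd_cons {k n : ℕ} (a : Fin (2 * k)) (w : Fin (n + 1) → Fin (2 * k)) :
    descCount (fun m => m % 2 = 1) (Fin.cons a w : Fin (n + 2) → Fin (2 * k)) =
      descCount (fun m => m % 2 = 1) w + if (w 0 : ℕ) < a ∧ (a : ℕ) % 2 = 0 then 1 else 0 := by
  rw [descCount_cons]
  exact congrArg _ (if_congr (by omega) rfl rfl)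

section Transfer

variable {R : Type*} [CommRing R] (x : R) (k : ℕ)

def oddDescSum (n : ℕ) : R :=
  ∑ w : Fin n → Fin (2 * k), x ^ descCount (fun m => m % 2 = 1) w

/- `k - 1 - (w 0) / 2` is the number of letter pairs `{2s - 1, 2s}` above the pair of the first
letter of `w`; its binomial weight counts the ways to extend a run to the left by `r` odd letters,
so that unrolling `weightedOddDescSum_succ` peels off a whole run. -/
def weightedOddDescSum (r n : ℕ) : R :=
  ∑ w : Fin (n + 1) → Fin (2 * k),
    ((k - 1 - (w 0 : ℕ) / 2).choose r : R) * x ^ descCount (fun m => m % 2 = 1) w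

lemma oddDescSum_zero : oddDescSum x k 0 = 1 := by
  simp [oddDescSum, descCount_eq_zero_of_le_one]

lemma weightedOddDescSum_zero (r : ℕ) :
    weightedOddDescSum x k r 0 = 2 * (k.choose (r + 1) : R) := by
  simp only [weightedOddDescSum, descCount_eq_zero_of_le_one _ le_rfl, pow_zero, mul_one]
  rw [sum_fun_fin_succ]
  simp only [Fin.cons_zero, Fintype.sum_unique, ← Nat.cast_sum, sum_choose_pairs_above]
  push_cast
  ring

lemma sum_choose_mul_pow_cons (r d b : ℕ) :
    ∑ a : Fin (2 * k), ((k - 1 - (a : ℕ) / 2).choose r : R) *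
        x ^ (d + if b < (a : ℕ) ∧ (a : ℕ) % 2 = 0 then 1 else 0)
      = 2 * k.choose (r + 1) * x ^ d + (x - 1) * (k - 1 - b / 2).choose (r + 1) * x ^ d := by
  have split (a : Fin (2 * k)) : ((k - 1 - (a : ℕ) / 2).choose r : R) *
        x ^ (d + if b < (a : ℕ) ∧ (a : ℕ) % 2 = 0 then 1 else 0)
      = ((k - 1 - (a : ℕ) / 2).choose r : R) * x ^ d + (x - 1) * x ^ d *
          ((if b < (a : ℕ) ∧ (a : ℕ) % 2 = 0 then (k - 1 - (a : ℕ) / 2).choose r else 0 : ℕ)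
            : R) := by
    split_ifs <;> push_cast <;> ring
  rw [sum_congr rfl fun a _ => split a, sum_add_distrib, ← sum_mul, ← mul_sum, ← Nat.cast_sum,
    ← Nat.cast_sum, sum_choose_pairs_above, sum_choose_pairs_above_of_lt]
  push_cast
  ring

lemma weightedOddDescSum_succ (r n : ℕ) :
    weightedOddDescSum x k r (n + 1)
      = 2 * k.choose (r + 1) * oddDescSum x k (n + 1)
        + (x - 1) * weightedOddDescSum x k (r + 1) n := by
  rw [weightedOddDescSum, sum_fun_fin_succ, sum_comm, oddDescSum, weightedOddDescSum, mul_sum,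
    mul_sum, ← sum_add_distrib]
  refine sum_congr rfl fun w _ => ?_
  simp only [Fin.cons_zero, descCount_odd_cons, sum_choose_mul_pow_cons]
  ring

lemma weightedOddDescSum_eq (n : ℕ) : ∀ r, weightedOddDescSum x k r n
    = ∑ u ∈ range (n + 1), 2 * k.choose (r + u + 1) * (x - 1) ^ u * oddDescSum x k (n - u) := by
  induction n with
  | zero => intro r; simp [weightedOddDescSum_zero, oddDescSum_zero]
  | succ n ih =>
    intro r
    rw [weightedOddDescSum_succ, ih, sum_range_succ' _ (n + 1), mul_sum]
    simp only [Nat.add_sub_add_right, add_zero, pow_zero, mul_one, Nat.sub_zero]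
    rw [add_comm]
    congr 1
    refine sum_congr rfl fun u _ => ?_
    rw [show r + 1 + u + 1 = r + (u + 1) + 1 by ring]
    ring

lemma oddDescSum_succ (n : ℕ) : oddDescSum x k (n + 1)
    = ∑ u ∈ range (n + 1), 2 * k.choose (u + 1) * (x - 1) ^ u * oddDescSum x k (n - u) := by
  have h := weightedOddDescSum_eq x k n 0
  simp only [weightedOddDescSum, Nat.choose_zero_right, Nat.cast_one, one_mul, zero_add] at h
  exact h

end Transfer

open Polynomial

/- The coefficient of `z ^ n` in `((1 + z) ^ k - 1) ^ j`, i.e. the sum over compositions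
`n = c₁ + ⋯ + cⱼ` with positive parts of `∏ C(k, cᵢ)`. -/
noncomputable def compositionWeight (k n j : ℕ) : ℤ :=
  (((X + 1 : ℤ[X]) ^ k - 1) ^ j).coeff n

lemma compositionWeight_zero_right (k n : ℕ) :
    compositionWeight k n 0 = if n = 0 then 1 else 0 := by
  simp [compositionWeight, coeff_one]

lemma compositionWeight_eq_zero_of_lt {k n j : ℕ} (h : n < j) : compositionWeight k n j = 0 := by
  have hX : (X : ℤ[X]) ∣ (X + 1) ^ k - 1 := by
    simp [X_dvd_iff, coeff_X_add_one_pow]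
  obtain ⟨q, hq⟩ := pow_dvd_pow_of_dvd hX j
  rw [compositionWeight, hq, coeff_X_pow_mul', if_neg (by omega)]

lemma compositionWeight_succ_succ (k n j : ℕ) :
    compositionWeight k (n + 1) (j + 1)
      = ∑ u ∈ range (n + 1), (k.choose (u + 1) : ℤ) * compositionWeight k (n - u) j := by
  rw [compositionWeight, pow_succ', coeff_mul, Nat.sum_antidiagonal_eq_sum_range_succ_mk,
    sum_range_succ']
  simp [compositionWeight, coeff_X_add_one_pow, coeff_one]

lemma compositionWeight_eq_sum (k n j : ℕ) :
    compositionWeight k n j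
      = ∑ i ∈ range (j + 1), (-1) ^ (j + i) * (j.choose i : ℤ) * ((k * i).choose n : ℤ) := by
  rw [compositionWeight, sub_eq_add_neg, add_pow, finsetSum_coeff]
  refine sum_congr rfl fun i hi => ?_
  have hij : j + i = j - i + 2 * i := by
    rw [mem_range] at hi
    omega
  rw [hij, pow_add, pow_mul (-1 : ℤ) 2 i, neg_one_sq, one_pow, mul_one, ← pow_mul,
    show ((X + 1) ^ (k * i) * (-1) ^ (j - i) * (j.choose i : ℤ[X]))
      = C ((-1) ^ (j - i) * (j.choose i : ℤ)) * (X + 1) ^ (k * i) by simp; ring,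
    coeff_C_mul, coeff_X_add_one_pow]

section ClosedForm

variable {R : Type*} [CommRing R] (t : R) (k : ℕ)

lemma pow_mul_sum_compositionWeight (m u : ℕ) :
    t ^ u * ∑ j ∈ range (m + 1), 2 ^ j * (compositionWeight k m j : R) * t ^ (m - j)
      = ∑ j ∈ range (m + u + 1), 2 ^ j * (compositionWeight k m j : R) * t ^ (m + u - j) := by
  rw [mul_sum]
  refine sum_subset_zero_on_sdiff (range_subset_range.2 (by omega)) (fun j hj => ?_)
    (fun j hj => ?_)
  · rw [mem_sdiff, mem_range, mem_range] at hj
    rw [compositionWeight_eq_zero_of_lt (by omega), Int.cast_zero, mul_zero, zero_mul]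
  · rw [mem_range] at hj
    rw [show m + u - j = m - j + u by omega, pow_add]
    ring

lemma sum_compositionWeight_succ (n : ℕ) :
    ∑ j ∈ range (n + 2), 2 ^ j * (compositionWeight k (n + 1) j : R) * t ^ (n + 1 - j)
      = ∑ u ∈ range (n + 1), 2 * k.choose (u + 1) * t ^ u *
          ∑ j ∈ range (n - u + 1),
            2 ^ j * (compositionWeight k (n - u) j : R) * t ^ (n - u - j) := by
  calc _ = ∑ j ∈ range (n + 1), ∑ u ∈ range (n + 1),
          2 * k.choose (u + 1) * (2 ^ j * (compositionWeight k (n - u) j : R) * t ^ (n - j)) := by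
        rw [sum_range_succ', compositionWeight_zero_right, if_neg (by omega)]
        simp only [compositionWeight_succ_succ, Int.cast_zero, mul_zero, zero_mul, add_zero,
          Int.cast_sum, Int.cast_mul, Int.cast_natCast, mul_sum, sum_mul, Nat.add_sub_add_right]
        refine sum_congr rfl fun j _ => sum_congr rfl fun u _ => ?_
        ring
    _ = _ := by
        rw [sum_comm]
        refine sum_congr rfl fun u hu => ?_
        rw [mem_range] at hu
        rw [mul_assoc, pow_mul_sum_compositionWeight, Nat.sub_add_cancel (by omega), mul_sum]

theorem oddDescSum_eq_sum_compositionWeight (n : ℕ) :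
    oddDescSum t k n
      = ∑ j ∈ range (n + 1), 2 ^ j * (compositionWeight k n j : R) * (t - 1) ^ (n - j) := by
  induction n using Nat.strong_induction_on with
  | _ n ih =>
    cases n with
    | zero => simp [oddDescSum_zero, compositionWeight_zero_right]
    | succ n =>
      rw [oddDescSum_succ, sum_compositionWeight_succ]
      exact sum_congr rfl fun u hu => by rw [ih (n - u) (by omega)]

end ClosedForm

lemma card_oddDesc_eq_coeff (k n p : ℕ) :
    ((univ.filter (fun w : Fin n → Fin (2 * k) =>
        descCount (fun m => m % 2 = 1) w = p)).card : ℤ)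
      = (oddDescSum (X : ℤ[X]) k n).coeff p := by
  simp [oddDescSum, finsetSum_coeff, coeff_X_pow, eq_comm]

lemma coeff_X_sub_one_pow (m p : ℕ) :
    ((X - 1 : ℤ[X]) ^ m).coeff p = (-1) ^ (m - p) * (m.choose p : ℤ) := by
  rw [sub_eq_add_neg, ← C_1, ← C_neg, coeff_X_add_C_pow]

lemma card_oddDesc_eq_sum (k n p : ℕ) :
    ((univ.filter (fun w : Fin n → Fin (2 * k) =>
          descCount (fun m => m % 2 = 1) w = p)).card : ℤ)
      = ∑ j ∈ range (n + 1), ∑ i ∈ range (j + 1),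
          (-1 : ℤ) ^ (n + p + i) *
            ((2 ^ j * j.choose i * (k * i).choose n * (n - j).choose p : ℕ) : ℤ) := by
  rw [card_oddDesc_eq_coeff, oddDescSum_eq_sum_compositionWeight, finsetSum_coeff]
  refine sum_congr rfl fun j hj => ?_
  rw [show (2 : ℤ[X]) ^ j * (compositionWeight k n j : ℤ[X])
      = C (2 ^ j * compositionWeight k n j) by simp,
    coeff_C_mul, coeff_X_sub_one_pow, compositionWeight_eq_sum, mul_sum, sum_mul]
  refine sum_congr rfl fun i _ => ?_
  rcases lt_or_ge (n - j) p with hp | hp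
  · simp [Nat.choose_eq_zero_of_lt hp]
  · rw [mem_range] at hj
    have hsign : (-1 : ℤ) ^ (j + i) * (-1) ^ (n - j - p) = (-1) ^ (n + p + i) := by
      rw [← pow_add, neg_one_pow_eq_pow_mod_two, neg_one_pow_eq_pow_mod_two (n + p + i)]
      congr 1
      omega
    push_cast
    rw [← hsign]
    ring

lemma riseCount_even_rev {k n : ℕ} (w : Fin n → Fin (2 * k)) :
    riseCount (fun m => 0 < m ∧ m % 2 = 0) (fun i => (w i).rev)
      = descCount (fun m => m % 2 = 1) w := by
  rw [riseCount, descCount]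
  congr 1
  refine filter_congr fun q _ => ?_
  have h1 := (w q.1).isLt
  have h2 := (w q.2).isLt
  simp only [Fin.val_rev]
  omega

lemma card_evenRise_eq_card_oddDesc (k n p : ℕ) :
    (univ.filter (fun w : Fin n → Fin (2 * k) =>
        riseCount (fun m => 0 < m ∧ m % 2 = 0) w = p)).card
      = (univ.filter (fun w : Fin n → Fin (2 * k) =>
        descCount (fun m => m % 2 = 1) w = p)).card := by
  refine card_equiv (Equiv.piCongrRight fun _ => Fin.revPerm) fun w => ?_
  simp [← riseCount_even_rev]

/- `O = {1,3,5,…}` is encoded as `fun x => x % 2 = 1` and `E = {2,4,6,…}` as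
`fun x => 0 < x ∧ x % 2 = 0`. -/
theorem stmt_11_general (k n p : ℕ) :
    ((Finset.univ.filter (fun w : Fin n → Fin (2 * k) =>
          descCount (fun x => x % 2 = 1) w = p)).card : ℤ)
        = ∑ j ∈ Finset.range (n + 1), ∑ i ∈ Finset.range (j + 1),
            (-1 : ℤ) ^ (n + p + i) *
              ((2 ^ j * j.choose i * (k * i).choose n * (n - j).choose p : ℕ) : ℤ)
      ∧ ((Finset.univ.filter (fun w : Fin n → Fin (2 * k) =>
            riseCount (fun x => 0 < x ∧ x % 2 = 0) w = p)).card : ℤ)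
        = ∑ j ∈ Finset.range (n + 1), ∑ i ∈ Finset.range (j + 1),
            (-1 : ℤ) ^ (n + p + i) *
              ((2 ^ j * j.choose i * (k * i).choose n * (n - j).choose p : ℕ) : ℤ) := by
  refine ⟨card_oddDesc_eq_sum k n p, ?_⟩
  rw [card_evenRise_eq_card_oddDesc]
  exact card_oddDesc_eq_sum k n p

theorem stmt_11 (k n p : ℕ) (hk : 1 ≤ k) :
    ((Finset.univ.filter (fun w : Fin n → Fin (2 * k) =>
          descCount (fun x => x % 2 = 1) w = p)).card : ℤ)
        = ∑ j ∈ Finset.range (n + 1), ∑ i ∈ Finset.range (j + 1),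
            (-1 : ℤ) ^ (n + p + i) *
              ((2 ^ j * j.choose i * (k * i).choose n * (n - j).choose p : ℕ) : ℤ)
      ∧ ((Finset.univ.filter (fun w : Fin n → Fin (2 * k) =>
            riseCount (fun x => 0 < x ∧ x % 2 = 0) w = p)).card : ℤ)
        = ∑ j ∈ Finset.range (n + 1), ∑ i ∈ Finset.range (j + 1),
            (-1 : ℤ) ^ (n + p + i) *
              ((2 ^ j * j.choose i * (k * i).choose n * (n - j).choose p : ℕ) : ℤ) :=
  stmt_11_general k n p
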